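/- Let Λ be a free abelian group of rank 2g equipped with a ℤ-valued unimodular symplectic form (a, b) ↦ a · b and an injective group homomorphism λ : Λ → ℂ. If {a₁, b₁, …, a_g, b_g} and {a′₁, b′₁, …, a′_g, b′_g} are two symplectic bases of Λ (i.e. aⱼ · bⱼ = 1 and all other pairings among basis elements vanish), then ∑ⱼ λ(aⱼ) × λ(bⱼ) = ∑ⱼ λ(a′ⱼ) × λ(b′ⱼ), where z × w = Im(z̄ w) denotes the cross product on ℂ ≅ ℝ². -/

import Mathlib

open Matrix Finset

/-- The cross product on ℂ ≅ ℝ²: `z × w = Im (z̄ w)`. -/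
noncomputable def cross (z w : ℂ) : ℝ := ((starRingEnd ℂ) z * w).im

lemma cross_def (z w : ℂ) : cross z w = z.re * w.im - z.im * w.re := by
  simp [cross, Complex.mul_im]; ring

lemma cross_sum_sum {ι : Type*} [Fintype ι] (u v : ι → ℂ) (c d : ι → ℤ) :
    cross (∑ k, c k • u k) (∑ l, d l • v l)
      = ∑ k, ∑ l, (c k : ℝ) * ((d l : ℝ) * cross (u k) (v l)) := by
  simp only [cross_def, Complex.re_sum, Complex.im_sum, zsmul_eq_mul,
    Complex.mul_re, Complex.mul_im, Complex.intCast_re, Complex.intCast_im,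
    zero_mul, mul_zero, sub_zero, zero_add, add_zero]
  rw [Finset.sum_mul_sum, Finset.sum_mul_sum, ← Finset.sum_sub_distrib]
  refine Finset.sum_congr rfl fun k _ => ?_
  rw [← Finset.sum_sub_distrib]
  refine Finset.sum_congr rfl fun l _ => ?_
  ring

section aux
variable {g : ℕ}

noncomputable def Jstd (g : ℕ) : Matrix (Fin g ⊕ Fin g) (Fin g ⊕ Fin g) ℝ :=
  Matrix.fromBlocks 0 1 (-1) 0

lemma Jstd_mul_Jstd : Jstd g * Jstd g = -1 := by
  have h : (-1 : Matrix (Fin g ⊕ Fin g) (Fin g ⊕ Fin g) ℝ)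
      = Matrix.fromBlocks (-1) 0 0 (-1) := by
    rw [← Matrix.fromBlocks_one, Matrix.fromBlocks_neg]
    simp
  simp [Jstd, Matrix.fromBlocks_multiply, h]

lemma triple_apply {ι : Type*} [Fintype ι] (P N : Matrix ι ι ℝ) (k l : ι) :
    (Pᵀ * N * P) k l = ∑ a, ∑ b, P a k * (P b l * N a b) := by
  simp only [Matrix.mul_apply, Matrix.transpose_apply, Finset.sum_mul]
  rw [Finset.sum_comm]
  refine Finset.sum_congr rfl fun a _ => Finset.sum_congr rfl fun b _ => by ring

lemma trace_Jstd_mul (M : Matrix (Fin g ⊕ Fin g) (Fin g ⊕ Fin g) ℝ)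
    (hM : ∀ k l, M k l = - M l k) :
    Matrix.trace (Jstd g * M) = -2 * ∑ i, M (Sum.inl i) (Sum.inr i) := by
  rw [Matrix.trace, Fintype.sum_sum_type]
  have h1 : ∀ i : Fin g, (Jstd g * M).diag (Sum.inl i) = M (Sum.inr i) (Sum.inl i) := by
    intro i
    simp [Matrix.diag, Matrix.mul_apply, Fintype.sum_sum_type, Jstd,
      Matrix.fromBlocks, Matrix.one_apply]
  have h2 : ∀ i : Fin g, (Jstd g * M).diag (Sum.inr i) = -M (Sum.inl i) (Sum.inr i) := by
    intro i
    simp [Matrix.diag, Matrix.mul_apply, Fintype.sum_sum_type, Jstd,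
      Matrix.fromBlocks, Matrix.one_apply]
  simp only [h1, h2]
  rw [Finset.sum_congr rfl (fun i _ => hM (Sum.inr i) (Sum.inl i))]
  simp
  ring

end aux

theorem stmt_15 (g : ℕ) (Λ : Type*) [AddCommGroup Λ]
    (B : Λ →ₗ[ℤ] Λ →ₗ[ℤ] ℤ) (halt : ∀ x : Λ, B x x = 0)
    (lam : Λ →+ ℂ) (hlam : Function.Injective lam)
    (e e' : Module.Basis (Fin g ⊕ Fin g) ℤ Λ)
    (he : ∀ i j : Fin g,
      B (e (Sum.inl i)) (e (Sum.inr j)) = (if i = j then 1 else 0) ∧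
      B (e (Sum.inl i)) (e (Sum.inl j)) = 0 ∧
      B (e (Sum.inr i)) (e (Sum.inr j)) = 0)
    (he' : ∀ i j : Fin g,
      B (e' (Sum.inl i)) (e' (Sum.inr j)) = (if i = j then 1 else 0) ∧
      B (e' (Sum.inl i)) (e' (Sum.inl j)) = 0 ∧
      B (e' (Sum.inr i)) (e' (Sum.inr j)) = 0) :
    ∑ i : Fin g, cross (lam (e (Sum.inl i))) (lam (e (Sum.inr i))) =
      ∑ i : Fin g, cross (lam (e' (Sum.inl i))) (lam (e' (Sum.inr i))) := by
  classical
  have hBanti : ∀ x y : Λ, B x y = - B y x := by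
    intro x y
    have h := halt (x + y)
    simp only [map_add, LinearMap.add_apply, halt] at h
    omega
  set P : Matrix (Fin g ⊕ Fin g) (Fin g ⊕ Fin g) ℝ :=
    Matrix.of fun a k => ((e.repr (e' k) a : ℤ) : ℝ) with hPdef
  set Q : Matrix (Fin g ⊕ Fin g) (Fin g ⊕ Fin g) ℝ :=
    Matrix.of fun a k => ((e'.repr (e k) a : ℤ) : ℝ) with hQdef
  set N : Matrix (Fin g ⊕ Fin g) (Fin g ⊕ Fin g) ℝ :=
    Matrix.of fun k l => cross (lam (e k)) (lam (e l)) with hNdef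
  set N' : Matrix (Fin g ⊕ Fin g) (Fin g ⊕ Fin g) ℝ :=
    Matrix.of fun k l => cross (lam (e' k)) (lam (e' l)) with hN'def
  -- lam of e' in terms of e
  have hlamE : ∀ k, lam (e' k) = ∑ a, (e.repr (e' k) a) • lam (e a) := by
    intro k
    conv_lhs => rw [← e.sum_repr (e' k)]
    rw [map_sum]
    simp [map_zsmul]
  -- N' = Pᵀ N P
  have hN' : N' = Pᵀ * N * P := by
    ext k l
    rw [triple_apply]
    show cross (lam (e' k)) (lam (e' l)) = _
    rw [hlamE k, hlamE l, cross_sum_sum]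
    rfl
  -- matrix of B in basis e is Jstd
  have hJB : ∀ k l, ((B (e k) (e l) : ℤ) : ℝ) = Jstd g k l := by
    rintro (i | i) (j | j)
    · simp [Jstd, Matrix.fromBlocks, (he i j).2.1]
    · simp [Jstd, Matrix.fromBlocks, (he i j).1, Matrix.one_apply]
    · rw [hBanti]
      simp [Jstd, Matrix.fromBlocks, (he j i).1, Matrix.one_apply, eq_comm]
    · simp [Jstd, Matrix.fromBlocks, (he i j).2.2]
  have hJB' : ∀ k l, ((B (e' k) (e' l) : ℤ) : ℝ) = Jstd g k l := by
    rintro (i | i) (j | j)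
    · simp [Jstd, Matrix.fromBlocks, (he' i j).2.1]
    · simp [Jstd, Matrix.fromBlocks, (he' i j).1, Matrix.one_apply]
    · rw [hBanti]
      simp [Jstd, Matrix.fromBlocks, (he' j i).1, Matrix.one_apply, eq_comm]
    · simp [Jstd, Matrix.fromBlocks, (he' i j).2.2]
  -- expansion of B in e'
  have hBexp : ∀ k l, (B (e' k) (e' l) : ℤ)
      = ∑ a, ∑ b, e.repr (e' k) a * (e.repr (e' l) b * B (e a) (e b)) := by
    intro k l
    conv_lhs => rw [← e.sum_repr (e' k), ← e.sum_repr (e' l)]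
    simp only [map_sum, map_zsmul, LinearMap.sum_apply, LinearMap.smul_apply,
      smul_eq_mul, Finset.mul_sum, Finset.sum_mul]
    rw [Finset.sum_comm]
    refine Finset.sum_congr rfl fun a _ => Finset.sum_congr rfl fun b _ => by ring
  -- symplectic condition for P
  have hsymm : Pᵀ * Jstd g * P = Jstd g := by
    ext k l
    rw [triple_apply, ← hJB' k l, hBexp k l]
    push_cast
    refine Finset.sum_congr rfl fun a _ => Finset.sum_congr rfl fun b _ => ?_
    rw [← hJB a b]
    push_cast
    rfl
  -- invertibility
  have hPmap : P = (e.toMatrix e').map (Int.castRingHom ℝ) := by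
    ext a k
    simp [hPdef, Module.Basis.toMatrix_apply]
  have hQmap : Q = (e'.toMatrix e).map (Int.castRingHom ℝ) := by
    ext a k
    simp [hQdef, Module.Basis.toMatrix_apply]
  have hPQ : P * Q = 1 := by
    rw [hPmap, hQmap, ← Matrix.map_mul, e.toMatrix_mul_toMatrix_flip e']
    simp
  -- key invariance : P * J * Pᵀ = J
  have step1 : Pᵀ * Jstd g = Jstd g * Q := by
    calc Pᵀ * Jstd g = Pᵀ * Jstd g * (P * Q) := by rw [hPQ, mul_one]
    _ = (Pᵀ * Jstd g * P) * Q := by simp only [mul_assoc]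
    _ = Jstd g * Q := by rw [hsymm]
  have step2 : (P * Jstd g * Pᵀ) * Jstd g = -1 := by
    calc (P * Jstd g * Pᵀ) * Jstd g = P * Jstd g * (Pᵀ * Jstd g) := by rw [mul_assoc]
    _ = P * Jstd g * (Jstd g * Q) := by rw [step1]
    _ = P * (Jstd g * Jstd g) * Q := by simp only [mul_assoc]
    _ = P * (-1) * Q := by rw [Jstd_mul_Jstd]
    _ = -(P * Q) := by rw [mul_neg_one, neg_mul]
    _ = -1 := by rw [hPQ]
  have hPJP : P * Jstd g * Pᵀ = Jstd g := by
    have h3 : -(P * Jstd g * Pᵀ) = -(Jstd g) := by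
      calc -(P * Jstd g * Pᵀ) = (P * Jstd g * Pᵀ) * (-1) := by rw [mul_neg_one]
      _ = (P * Jstd g * Pᵀ) * (Jstd g * Jstd g) := by rw [Jstd_mul_Jstd]
      _ = ((P * Jstd g * Pᵀ) * Jstd g) * Jstd g := by simp only [mul_assoc]
      _ = (-1) * Jstd g := by rw [step2]
      _ = -(Jstd g) := by rw [neg_one_mul]
    exact neg_inj.mp h3
  -- antisymmetry of N and N'
  have hNanti : ∀ k l, N k l = - N l k := by
    intro k l
    show cross _ _ = - cross _ _
    simp [cross_def]; ring
  have hN'anti : ∀ k l, N' k l = - N' l k := by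
    intro k l
    show cross _ _ = - cross _ _
    simp [cross_def]; ring
  -- trace invariance
  have tr_eq : Matrix.trace (Jstd g * N') = Matrix.trace (Jstd g * N) := by
    rw [hN']
    have h4 : Jstd g * (Pᵀ * N * P) = (Jstd g * Pᵀ * N) * P := by
      simp [mul_assoc]
    rw [h4, Matrix.trace_mul_comm]
    have h5 : P * (Jstd g * Pᵀ * N) = Jstd g * N := by
      rw [← mul_assoc, ← mul_assoc, hPJP]
    rw [h5]
  have t1 := trace_Jstd_mul N hNanti
  have t2 := trace_Jstd_mul N' hN'anti
  rw [t1, t2] at tr_eq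
  have : ∑ i, N' (Sum.inl i) (Sum.inr i) = ∑ i, N (Sum.inl i) (Sum.inr i) := by
    linarith
  exact this.symm
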